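/- If ∑_{1≤i<j≤r} ‖qᵢρᵢ − q_jρ_j‖₁ ≤ (r−1)²/(r+1), then the new lower bound L₂_new = (1/r)(1 + (1/(r−1))∑_{i<j}‖qᵢρᵢ − q_jρ_j‖₁) is at least the Barnum–Knill lower bound L₂ = 1 − ∑_{i<j} √(qᵢq_j)·F(ρᵢ,ρ_j). -/

import Mathlib

open scoped ComplexOrder

/-- The square root of a positive semidefinite matrix, spelled out as the former
`Matrix.PosSemidef.sqrt` (removed from Mathlib). -/
noncomputable def psdSqrt {n : ℕ} {A : Matrix (Fin n) (Fin n) ℂ} (hA : A.PosSemidef) :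
    Matrix (Fin n) (Fin n) ℂ :=
  (hA.1.eigenvectorUnitary : Matrix (Fin n) (Fin n) ℂ) *
    Matrix.diagonal ((↑) ∘ Real.sqrt ∘ hA.1.eigenvalues) *
    (star (hA.1.eigenvectorUnitary : Matrix (Fin n) (Fin n) ℂ))

/-- The operator absolute value `√(AᴴA)` of a matrix. -/
noncomputable def matAbs {n : ℕ} (A : Matrix (Fin n) (Fin n) ℂ) : Matrix (Fin n) (Fin n) ℂ :=
  psdSqrt (Matrix.posSemidef_conjTranspose_mul_self A)

/-- The trace norm `‖A‖₁ = tr √(AᴴA)`. -/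
noncomputable def traceNorm {n : ℕ} (A : Matrix (Fin n) (Fin n) ℂ) : ℝ :=
  ((matAbs A).trace).re

/-- The positive part `A⁺ = (|A| + A)/2` of a self-adjoint matrix `A`, so that
`A = A⁺ - A⁻` with `A⁺, A⁻ ≥ 0`. -/
noncomputable def matPosPart {n : ℕ} (A : Matrix (Fin n) (Fin n) ℂ) : Matrix (Fin n) (Fin n) ℂ :=
  (2 : ℂ)⁻¹ • (matAbs A + A)

/-- A density operator: positive semidefinite with unit trace. -/
def IsDensity {n : ℕ} (ρ : Matrix (Fin n) (Fin n) ℂ) : Prop :=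
  ρ.PosSemidef ∧ ρ.trace = 1

/-- A POVM with `r` outcomes: positive semidefinite effects summing to the identity. -/
def IsPOVM {n r : ℕ} (M : Fin r → Matrix (Fin n) (Fin n) ℂ) : Prop :=
  (∀ i, (M i).PosSemidef) ∧ ∑ i, M i = 1

/-- Success probability `∑ i, q i * tr (ρ i * M i)` of a measurement. -/
noncomputable def successProb {n r : ℕ} (q : Fin r → ℝ)
    (ρ M : Fin r → Matrix (Fin n) (Fin n) ℂ) : ℝ :=
  ∑ i, q i * ((ρ i * M i).trace).re

/-- Optimal success probability under minimum-error discrimination. -/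
noncomputable def optSuccess {n r : ℕ} (q : Fin r → ℝ)
    (ρ : Fin r → Matrix (Fin n) (Fin n) ℂ) : ℝ :=
  sSup {p | ∃ M, IsPOVM M ∧ p = successProb q ρ M}

/-- The fidelity `F(ρ,σ) = ‖√ρ √σ‖₁` of two positive semidefinite matrices. -/
noncomputable def fidelity {n : ℕ} {ρ σ : Matrix (Fin n) (Fin n) ℂ}
    (hρ : ρ.PosSemidef) (hσ : σ.PosSemidef) : ℝ :=
  traceNorm (psdSqrt hρ * psdSqrt hσ)

/-!
With `A = √P`, `B = √Q` and `S = sign (A - B)`, the identity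
`2 (P - Q) = (A - B)(A + B) + (A + B)(A - B)` gives `tr ((P - Q) S) = tr ((A + B) |A - B|)`.
Splitting `A - B` into positive and negative parts shows this is at least `tr ((A - B)²)`, and
since `-1 ≤ S ≤ 1` it is at most `‖P - Q‖₁`: this is the Powers–Størmer inequality
`tr P + tr Q - 2 Re tr (√P √Q) ≤ ‖P - Q‖₁`. Together with `Re tr X ≤ ‖X‖₁` it yields
`2 √(qᵢ qⱼ) F(ρᵢ, ρⱼ) ≥ qᵢ + qⱼ - ‖qᵢρᵢ - qⱼρⱼ‖₁`. Summing over the pairs `i < j`, in which each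
`qᵢ` occurs `r - 1` times, bounds the Barnum–Knill bound by `1 - (r - 1 - S) / 2`, where `S` is the
sum of the trace norms; the new bound exceeds this by
`(r - 2) ((r - 1)² - (r + 1) S) / (2 r (r - 1)) ≥ 0`.
-/

open scoped MatrixOrder

namespace Matrix

variable {ι : Type*} [Fintype ι] [DecidableEq ι]

lemma continuousOn_spectrum (f : ℝ → ℝ) (A : Matrix ι ι ℂ) : ContinuousOn f (spectrum ℝ A) :=
  finite_real_spectrum.continuousOn f

lemma cfc_mul_cfc (f g : ℝ → ℝ) (A : Matrix ι ι ℂ) :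
    cfc f A * cfc g A = cfc (fun x => f x * g x) A :=
  (cfc_mul f g A (continuousOn_spectrum f A) (continuousOn_spectrum g A)).symm

lemma re_trace_mul_nonneg {A B : Matrix ι ι ℂ} (hA : 0 ≤ A) (hB : 0 ≤ B) :
    0 ≤ (A * B).trace.re := by
  have hsqrt : IsSelfAdjoint (CFC.sqrt A) := (CFC.sqrt_nonneg A).isSelfAdjoint
  have hconj : 0 ≤ CFC.sqrt A * B * CFC.sqrt A := by
    simpa [hsqrt.star_eq] using star_left_conjugate_nonneg hB (CFC.sqrt A)
  rw [← CFC.sqrt_mul_sqrt_self A, mul_assoc, trace_mul_comm]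
  exact (RCLike.nonneg_iff.mp (nonneg_iff_posSemidef.mp hconj).trace_nonneg).1

lemma re_trace_mul_le_re_trace_abs {D C : Matrix ι ι ℂ} (hD : IsSelfAdjoint D)
    (hC₁ : -1 ≤ C) (hC₂ : C ≤ 1) : (D * C).trace.re ≤ (CFC.abs D).trace.re := by
  have key : (D⁺ + D⁻) - (D⁺ - D⁻) * C = D⁺ * (1 - C) + D⁻ * (1 + C) := by noncomm_ring
  rw [CFC.posPart_add_negPart D, CFC.posPart_sub_negPart D] at key
  have h₁ := re_trace_mul_nonneg (CFC.posPart_nonneg D) (sub_nonneg.mpr hC₂)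
  have h₂ := re_trace_mul_nonneg (CFC.negPart_nonneg D) (neg_le_iff_add_nonneg'.mp hC₁)
  have := congrArg (fun M => M.trace.re) key
  simp only [trace_sub, trace_add, Complex.sub_re, Complex.add_re] at this
  linarith

lemma re_trace_mul_self_le_re_trace_add_mul_abs {A B : Matrix ι ι ℂ} (hA : 0 ≤ A)
    (hB : 0 ≤ B) :
    ((A - B) * (A - B)).trace.re ≤ ((A + B) * CFC.abs (A - B)).trace.re := by
  have hR : IsSelfAdjoint (A - B) := hA.isSelfAdjoint.sub hB.isSelfAdjoint
  set R := A - B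
  have key : (A + B) * (R⁺ + R⁻) - R * (R⁺ - R⁻)
      = (A * R⁻ + B * R⁺) + (A * R⁻ + B * R⁺) := by
    simp only [R]; noncomm_ring
  rw [CFC.posPart_add_negPart R, CFC.posPart_sub_negPart R] at key
  have h₁ := re_trace_mul_nonneg hA (CFC.negPart_nonneg R)
  have h₂ := re_trace_mul_nonneg hB (CFC.posPart_nonneg R)
  have := congrArg (fun M => M.trace.re) key
  simp only [trace_sub, trace_add, Complex.sub_re, Complex.add_re] at this
  linarith

section sign

variable {R : Matrix ι ι ℂ}

lemma cfc_sign_mul_self (hR : IsSelfAdjoint R) :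
    cfc (fun x : ℝ => (SignType.sign x : ℝ)) R * R = CFC.abs R := by
  nth_rewrite 2 [← cfc_id' ℝ R]
  rw [cfc_mul_cfc, CFC.abs_eq_cfc_norm R]
  exact cfc_congr fun x _ => by rw [Real.norm_eq_abs, sign_mul_self]

lemma self_mul_cfc_sign (hR : IsSelfAdjoint R) :
    R * cfc (fun x : ℝ => (SignType.sign x : ℝ)) R = CFC.abs R := by
  nth_rewrite 1 [← cfc_id' ℝ R]
  rw [cfc_mul_cfc, CFC.abs_eq_cfc_norm R]
  exact cfc_congr fun x _ => by rw [Real.norm_eq_abs, self_mul_sign]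

lemma neg_one_le_cfc_sign (hR : IsSelfAdjoint R) :
    -1 ≤ cfc (fun x : ℝ => (SignType.sign x : ℝ)) R := by
  simpa using algebraMap_le_cfc _ (-1 : ℝ) R
    (fun x _ => by cases SignType.sign x <;> norm_num) (continuousOn_spectrum _ R)

lemma cfc_sign_le_one : cfc (fun x : ℝ => (SignType.sign x : ℝ)) R ≤ 1 :=
  cfc_le_one _ R fun x _ => by cases SignType.sign x <;> norm_num

end sign

theorem powers_stormer {P Q : Matrix ι ι ℂ} (hP : 0 ≤ P) (hQ : 0 ≤ Q) :
    P.trace.re + Q.trace.re - 2 * (CFC.sqrt P * CFC.sqrt Q).trace.re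
      ≤ (CFC.abs (P - Q)).trace.re := by
  set A := CFC.sqrt P
  set B := CFC.sqrt Q
  have hA : 0 ≤ A := CFC.sqrt_nonneg P
  have hB : 0 ≤ B := CFC.sqrt_nonneg Q
  have hR : IsSelfAdjoint (A - B) := hA.isSelfAdjoint.sub hB.isSelfAdjoint
  set S := cfc (fun x : ℝ => (SignType.sign x : ℝ)) (A - B)
  have hAA : A * A = P := CFC.sqrt_mul_sqrt_self P
  have hBB : B * B = Q := CFC.sqrt_mul_sqrt_self Q
  have hsplit : (P - Q) * S + (P - Q) * S
      = (A - B) * ((A + B) * S) + (A + B) * ((A - B) * S) := by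
    rw [← hAA, ← hBB]; noncomm_ring
  have htrace_sign : ((P - Q) * S).trace.re = ((A + B) * CFC.abs (A - B)).trace.re := by
    have := congrArg (fun M => M.trace.re) hsplit
    simp only [trace_add, Complex.add_re] at this
    rw [trace_mul_comm (A - B), mul_assoc, cfc_sign_mul_self hR, self_mul_cfc_sign hR] at this
    linarith
  have hsq : ((A - B) * (A - B)).trace.re = P.trace.re + Q.trace.re - 2 * (A * B).trace.re := by
    have : (A - B) * (A - B) = A * A + B * B - A * B - B * A := by noncomm_ring
    rw [this, hAA, hBB, trace_sub, trace_sub, trace_add, trace_mul_comm B A]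
    simp only [Complex.sub_re, Complex.add_re]
    ring
  have hupper := re_trace_mul_le_re_trace_abs (hP.isSelfAdjoint.sub hQ.isSelfAdjoint)
    (neg_one_le_cfc_sign hR) cfc_sign_le_one
  linarith [re_trace_mul_self_le_re_trace_add_mul_abs hA hB]

lemma re_trace_mul_le_of_star_mul_self_le_one {W Y : Matrix ι ι ℂ} (hW : star W * W ≤ 1)
    (hY : 0 ≤ Y) : (W * Y).trace.re ≤ Y.trace.re := by
  have hpos : 0 ≤ star (1 - W) * (1 - W) + (1 - star W * W) :=
    add_nonneg (star_mul_self_nonneg _) (sub_nonneg.mpr hW)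
  have hexpand : (star (1 - W) * (1 - W) + (1 - star W * W)) * Y
      = Y + Y - W * Y - star W * Y := by
    rw [star_sub, star_one]; noncomm_ring
  have hstar : (star W * Y).trace.re = (W * Y).trace.re := by
    rw [← hY.isSelfAdjoint.star_eq, ← star_mul, star_eq_conjTranspose, trace_conjTranspose,
      trace_mul_comm, Complex.star_def, Complex.conj_re, hY.isSelfAdjoint.star_eq]
  have := re_trace_mul_nonneg hpos hY
  rw [hexpand] at this
  simp only [trace_sub, trace_add, Complex.sub_re, Complex.add_re] at this
  linarith

lemma re_trace_le_re_trace_abs (M : Matrix ι ι ℂ) : M.trace.re ≤ (CFC.abs M).trace.re := by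
  have hTT : star M * M = cfc (fun x : ℝ => x * x) (CFC.abs M) := by
    rw [← CFC.abs_mul_abs M]
    conv_lhs => rw [← cfc_id' ℝ (CFC.abs M)]
    exact cfc_mul_cfc _ _ _
  set T := CFC.abs M
  -- `G` is the Moore–Penrose inverse of `T` (as `0⁻¹ = 0`), so `M * G` is a partial isometry.
  set G := cfc (fun x : ℝ => x⁻¹) T
  set K := cfc (fun x : ℝ => 1 - x⁻¹ * x) T
  have hGT : G * T = 1 - K := by
    rw [← cfc_id' ℝ T, cfc_mul_cfc, ← cfc_const_one ℝ T,
      ← cfc_sub _ _ T (continuousOn_spectrum _ T) (continuousOn_spectrum _ T)]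
    exact cfc_congr fun x _ => by ring
  have hG : IsSelfAdjoint G := IsSelfAdjoint.cfc
  have hK : IsSelfAdjoint K := IsSelfAdjoint.cfc
  have hW : star (M * G) * (M * G) ≤ 1 := by
    rw [star_mul, hG.star_eq, mul_assoc, ← mul_assoc (star M), hTT, ← mul_assoc]
    simp only [G, cfc_mul_cfc]
    refine cfc_le_one _ T fun x _ => ?_
    rcases eq_or_ne x 0 with rfl | hx
    · simp
    · simp [hx]
  have hMK : M * K = 0 := by
    rw [← conjTranspose_mul_self_eq_zero, ← star_eq_conjTranspose, star_mul, hK.star_eq,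
      mul_assoc, ← mul_assoc (star M), hTT, ← mul_assoc]
    simp only [K, cfc_mul_cfc]
    rw [← cfc_zero ℝ T]
    refine cfc_congr fun x _ => ?_
    rcases eq_or_ne x 0 with rfl | hx
    · simp
    · simp [hx]
  calc M.trace.re = (M * G * T).trace.re := by
        rw [mul_assoc, hGT, mul_sub, hMK, mul_one, sub_zero]
    _ ≤ T.trace.re := re_trace_mul_le_of_star_mul_self_le_one hW (CFC.abs_nonneg M)

end Matrix

open Matrix

variable {n : ℕ}

lemma psdSqrt_eq_cfcSqrt {A : Matrix (Fin n) (Fin n) ℂ} (hA : A.PosSemidef) :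
    psdSqrt hA = CFC.sqrt A := by
  rw [CFC.sqrt_eq_real_sqrt A hA.nonneg, cfcₙ_eq_cfc, hA.1.cfc_eq, IsHermitian.cfc]
  simp [psdSqrt, Unitary.conjStarAlgAut_apply]

lemma traceNorm_eq_re_trace_abs (A : Matrix (Fin n) (Fin n) ℂ) :
    traceNorm A = (CFC.abs A).trace.re := by
  rw [traceNorm, matAbs, psdSqrt_eq_cfcSqrt, CFC.abs, star_eq_conjTranspose]

lemma re_trace_le_traceNorm (A : Matrix (Fin n) (Fin n) ℂ) : A.trace.re ≤ traceNorm A :=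
  traceNorm_eq_re_trace_abs A ▸ re_trace_le_re_trace_abs A

lemma traceNorm_smul (c : ℂ) (A : Matrix (Fin n) (Fin n) ℂ) :
    traceNorm (c • A) = ‖c‖ * traceNorm A := by
  simp [traceNorm_eq_re_trace_abs, CFC.abs_smul, trace_smul]

lemma psdSqrt_smul {c : ℝ} (hc : 0 ≤ c) {A : Matrix (Fin n) (Fin n) ℂ} (hA : A.PosSemidef)
    (hcA : ((c : ℂ) • A).PosSemidef) : psdSqrt hcA = (√c : ℂ) • psdSqrt hA := by
  rw [psdSqrt_eq_cfcSqrt, psdSqrt_eq_cfcSqrt]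
  refine CFC.sqrt_unique ?_ ?_
  · rw [smul_mul_smul_comm, ← Complex.ofReal_mul, Real.mul_self_sqrt hc,
      CFC.sqrt_mul_sqrt_self A hA.nonneg]
  · exact smul_nonneg (Complex.zero_le_real.mpr (Real.sqrt_nonneg c)) (CFC.sqrt_nonneg A)

lemma fidelity_smul {c d : ℝ} (hc : 0 ≤ c) (hd : 0 ≤ d) {ρ σ : Matrix (Fin n) (Fin n) ℂ}
    (hρ : ρ.PosSemidef) (hσ : σ.PosSemidef) (hcρ : ((c : ℂ) • ρ).PosSemidef)
    (hdσ : ((d : ℂ) • σ).PosSemidef) :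
    fidelity hcρ hdσ = √(c * d) * fidelity hρ hσ := by
  rw [fidelity, fidelity, psdSqrt_smul hc hρ, psdSqrt_smul hd hσ, smul_mul_smul_comm,
    traceNorm_smul, ← Complex.ofReal_mul, Complex.norm_real, Real.norm_eq_abs,
    abs_of_nonneg (by positivity), Real.sqrt_mul hc]

lemma re_trace_add_sub_traceNorm_le_two_mul_fidelity {ρ σ : Matrix (Fin n) (Fin n) ℂ}
    (hρ : ρ.PosSemidef) (hσ : σ.PosSemidef) :
    ρ.trace.re + σ.trace.re - traceNorm (ρ - σ) ≤ 2 * fidelity hρ hσ := by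
  have h := powers_stormer hρ.nonneg hσ.nonneg
  rw [← traceNorm_eq_re_trace_abs, ← psdSqrt_eq_cfcSqrt hρ, ← psdSqrt_eq_cfcSqrt hσ] at h
  have := re_trace_le_traceNorm (psdSqrt hρ * psdSqrt hσ)
  rw [fidelity]
  linarith

lemma IsDensity.add_sub_traceNorm_smul_sub_smul_le {ρ σ : Matrix (Fin n) (Fin n) ℂ}
    (hρ : IsDensity ρ) (hσ : IsDensity σ) {a b : ℝ} (ha : 0 ≤ a) (hb : 0 ≤ b) :
    a + b - traceNorm ((a : ℂ) • ρ - (b : ℂ) • σ) ≤ 2 * (√(a * b) * fidelity hρ.1 hσ.1) := by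
  have haρ := hρ.1.smul (Complex.zero_le_real.mpr ha)
  have hbσ := hσ.1.smul (Complex.zero_le_real.mpr hb)
  have h := re_trace_add_sub_traceNorm_le_two_mul_fidelity haρ hbσ
  rw [fidelity_smul ha hb hρ.1 hσ.1] at h
  simpa [trace_smul, hρ.2, hσ.2] using h

lemma Finset.sum_filter_fst_lt_snd_add {ι : Type*} [Fintype ι] [LinearOrder ι] (f : ι → ℝ) :
    ∑ p ∈ univ.filter (fun p : ι × ι => p.1 < p.2), (f p.1 + f p.2)
      = ((Fintype.card ι : ℝ) - 1) * ∑ i, f i := by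
  have hswap : ∑ p ∈ univ.filter (fun p : ι × ι => p.1 < p.2), f p.2
      = ∑ p ∈ univ.filter (fun p : ι × ι => p.2 < p.1), f p.1 :=
    Finset.sum_equiv (Equiv.prodComm ι ι) (by simp) (by simp)
  have hrow : ∀ i : ι, ∑ j, (if i < j then f i else 0) + ∑ j, (if j < i then f i else 0)
      = ((Fintype.card ι : ℝ) - 1) * f i := by
    intro i
    have hsplit : ∀ j, (if i < j then f i else 0) + (if j < i then f i else 0)
        = f i - if i = j then f i else 0 := by
      intro j
      rcases lt_trichotomy i j with h | rfl | h
      · simp [h, h.not_gt, h.ne]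
      · simp
      · simp [h, h.not_gt, h.ne']
    rw [← Finset.sum_add_distrib]
    simp only [hsplit, Finset.sum_sub_distrib, Finset.sum_ite_eq, Finset.mem_univ, if_true,
      Finset.sum_const, Finset.card_univ, nsmul_eq_mul]
    ring
  rw [Finset.sum_add_distrib, hswap, Finset.sum_filter, Finset.sum_filter,
    Fintype.sum_prod_type, Fintype.sum_prod_type, ← Finset.sum_add_distrib, Finset.mul_sum]
  exact Finset.sum_congr rfl fun i _ => hrow i

lemma one_sub_le_inv_mul_one_add_inv_mul {x S F : ℝ} (hx : 2 ≤ x)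
    (hS : S ≤ (x - 1) ^ 2 / (x + 1)) (hF : x - 1 - S ≤ 2 * F) :
    1 - F ≤ 1 / x * (1 + 1 / (x - 1) * S) := by
  have hS' : S * (x + 1) ≤ (x - 1) ^ 2 := (le_div_iff₀ (by linarith)).mp hS
  have hgap : 0 ≤ 1 / x * (1 + 1 / (x - 1) * S) - (1 - (x - 1 - S) / 2) := by
    have hx₁ : 0 < x - 1 := by linarith
    rw [show 1 / x * (1 + 1 / (x - 1) * S) - (1 - (x - 1 - S) / 2)
      = (x - 2) * ((x - 1) ^ 2 - S * (x + 1)) / (2 * x * (x - 1)) by field_simp; ring]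
    exact div_nonneg (mul_nonneg (by linarith) (by linarith)) (by positivity)
  linarith

theorem stmt17 {n r : ℕ} (hr : 2 ≤ r) (ρ : Fin r → Matrix (Fin n) (Fin n) ℂ)
    (q : Fin r → ℝ) (hρ : ∀ i, IsDensity (ρ i)) (hq : ∀ i, 0 < q i)
    (hq1 : ∑ i, q i = 1)
    (hS : ∑ p ∈ Finset.univ.filter (fun p : Fin r × Fin r => p.1 < p.2),
            traceNorm ((q p.1 : ℂ) • ρ p.1 - (q p.2 : ℂ) • ρ p.2)
        ≤ ((r : ℝ) - 1) ^ 2 / ((r : ℝ) + 1)) :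
    (1 / (r : ℝ)) * (1 + (1 / ((r : ℝ) - 1)) *
        ∑ p ∈ Finset.univ.filter (fun p : Fin r × Fin r => p.1 < p.2),
            traceNorm ((q p.1 : ℂ) • ρ p.1 - (q p.2 : ℂ) • ρ p.2))
      ≥ 1 - ∑ p ∈ Finset.univ.filter (fun p : Fin r × Fin r => p.1 < p.2),
          Real.sqrt (q p.1 * q p.2) * fidelity (hρ p.1).1 (hρ p.2).1 := by
  have hpairs := Finset.sum_le_sum fun p (_ : p ∈ Finset.univ.filter
    (fun p : Fin r × Fin r => p.1 < p.2)) =>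
      (hρ p.1).add_sub_traceNorm_smul_sub_smul_le (hρ p.2) (hq p.1).le (hq p.2).le
  rw [Finset.sum_sub_distrib, Finset.sum_filter_fst_lt_snd_add, hq1, Fintype.card_fin, mul_one,
    ← Finset.mul_sum] at hpairs
  exact one_sub_le_inv_mul_one_add_inv_mul (by exact_mod_cast hr) hS (by linarith)
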